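/- Suppose supp(f_X) ⊂ ℝ^p is contained in a ball of radius C₁ around the origin. Then for all δ > 0, all V, V' ∈ ℝ^{p×q} with orthonormal columns satisfying ‖VVᵀ − V'V'ᵀ‖ < δ, all s, s' ∈ supp(f_X) with ‖s − s'‖ < δ, and all x ∈ supp(f_X), one has |d(V,s)(x) − d(V',s')(x)| ≤ (8C₁ + 4C₁²) δ, where d(V,s)(x) = ‖(I_p − VVᵀ)(x − s)‖². -/
import Mathlib


open Matrix

/-- Frobenius norm of a real matrix. -/
noncomputable def frob {p q : ℕ} (A : Matrix (Fin p) (Fin q) ℝ) : ℝ :=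
  Real.sqrt (∑ i, ∑ j, (A i j) ^ 2)

section aux

variable {p q : ℕ}

/-- Euclidean norm of a vector. -/
noncomputable def nv {n : ℕ} (v : Fin n → ℝ) : ℝ := Real.sqrt (v ⬝ᵥ v)

lemma dot_self_nonneg {n : ℕ} (v : Fin n → ℝ) : 0 ≤ v ⬝ᵥ v :=
  Finset.sum_nonneg fun i _ => mul_self_nonneg _

lemma nv_nonneg {n : ℕ} (v : Fin n → ℝ) : 0 ≤ nv v := Real.sqrt_nonneg _

lemma sq_nv {n : ℕ} (v : Fin n → ℝ) : nv v ^ 2 = v ⬝ᵥ v :=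
  Real.sq_sqrt (dot_self_nonneg v)

lemma dot_eq_sum_sq {n : ℕ} (v : Fin n → ℝ) : v ⬝ᵥ v = ∑ i, v i ^ 2 := by
  simp [dotProduct, sq]

/-- Cauchy–Schwarz for dot products. -/
lemma abs_dot_le {n : ℕ} (u v : Fin n → ℝ) : |u ⬝ᵥ v| ≤ nv u * nv v := by
  have h := Finset.sum_mul_sq_le_sq_mul_sq Finset.univ u v
  have h2 : (u ⬝ᵥ v) ^ 2 ≤ (nv u * nv v) ^ 2 := by
    rw [mul_pow, sq_nv, sq_nv, dot_eq_sum_sq, dot_eq_sum_sq]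
    exact h
  have h3 := Real.sqrt_le_sqrt h2
  rwa [Real.sqrt_sq_eq_abs, Real.sqrt_sq (mul_nonneg (nv_nonneg u) (nv_nonneg v))] at h3

lemma nv_sub_comm {n : ℕ} (u v : Fin n → ℝ) : nv (u - v) = nv (v - u) := by
  unfold nv
  congr 1
  rw [dot_eq_sum_sq, dot_eq_sum_sq]
  exact Finset.sum_congr rfl fun i _ => by simp only [Pi.sub_apply]; ring

/-- Triangle inequality for `nv`. -/
lemma nv_add_le {n : ℕ} (u v : Fin n → ℝ) : nv (u + v) ≤ nv u + nv v := by
  have h : (u + v) ⬝ᵥ (u + v) = u ⬝ᵥ u + 2 * (u ⬝ᵥ v) + v ⬝ᵥ v := by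
    simp only [dotProduct, Pi.add_apply, Finset.mul_sum]
    rw [← Finset.sum_add_distrib, ← Finset.sum_add_distrib]
    exact Finset.sum_congr rfl fun i _ => by ring
  have hle : (u + v) ⬝ᵥ (u + v) ≤ (nv u + nv v) ^ 2 := by
    rw [h]
    have := abs_dot_le u v
    have h2 : u ⬝ᵥ v ≤ nv u * nv v := (abs_le.mp this).2
    have := sq_nv u; have := sq_nv v
    nlinarith [nv_nonneg u, nv_nonneg v]
  calc nv (u + v) ≤ Real.sqrt ((nv u + nv v) ^ 2) := Real.sqrt_le_sqrt hle
    _ = nv u + nv v := Real.sqrt_sq (add_nonneg (nv_nonneg u) (nv_nonneg v))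

/-- Norm bound for matrix-vector products via the Frobenius norm. -/
lemma nv_mulVec_le_frob {A : Matrix (Fin p) (Fin q) ℝ} (v : Fin q → ℝ) :
    nv (A.mulVec v) ≤ frob A * nv v := by
  have hsq : (A.mulVec v) ⬝ᵥ (A.mulVec v) ≤ (∑ i, ∑ j, (A i j) ^ 2) * (v ⬝ᵥ v) := by
    rw [dot_eq_sum_sq, Finset.sum_mul]
    refine Finset.sum_le_sum fun i _ => ?_
    have : A.mulVec v i = ∑ j, A i j * v j := rfl
    rw [this]
    calc (∑ j, A i j * v j) ^ 2 ≤ (∑ j, (A i j) ^ 2) * (∑ j, (v j) ^ 2) :=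
          Finset.sum_mul_sq_le_sq_mul_sq _ _ _
      _ = (∑ j, (A i j) ^ 2) * (v ⬝ᵥ v) := by rw [dot_eq_sum_sq]
  have h1 : nv (A.mulVec v) ≤ Real.sqrt ((∑ i, ∑ j, (A i j) ^ 2) * (v ⬝ᵥ v)) :=
    Real.sqrt_le_sqrt hsq
  rwa [Real.sqrt_mul (by positivity)] at h1

/-- If `Vᵀ V = 1` then `V` preserves the norm. -/
lemma nv_isometry {V : Matrix (Fin p) (Fin q) ℝ} (hV : Vᵀ * V = 1) (y : Fin q → ℝ) :
    nv (V.mulVec y) = nv y := by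
  unfold nv
  congr 1
  calc V.mulVec y ⬝ᵥ V.mulVec y = V.vecMul (V.mulVec y) ⬝ᵥ y := dotProduct_mulVec _ _ _
    _ = (Vᵀ * V).mulVec y ⬝ᵥ y := by rw [← mulVec_transpose, mulVec_mulVec]
    _ = y ⬝ᵥ y := by rw [hV, one_mulVec]

/-- If `Vᵀ V = 1` then `Vᵀ` is a contraction. -/
lemma nv_transpose_le {V : Matrix (Fin p) (Fin q) ℝ} (hV : Vᵀ * V = 1) (w : Fin p → ℝ) :
    nv (Vᵀ.mulVec w) ≤ nv w := by
  set y := Vᵀ.mulVec w with hy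
  have key : nv y ^ 2 ≤ nv w * nv y := by
    rw [sq_nv]
    calc y ⬝ᵥ y = Vᵀ.mulVec w ⬝ᵥ y := by rw [hy]
      _ = V.vecMul w ⬝ᵥ y := by rw [← mulVec_transpose]
      _ = w ⬝ᵥ V.mulVec y := (dotProduct_mulVec w V y).symm
      _ ≤ |w ⬝ᵥ V.mulVec y| := le_abs_self _
      _ ≤ nv w * nv (V.mulVec y) := abs_dot_le _ _
      _ = nv w * nv y := by rw [nv_isometry hV]
  rcases eq_or_lt_of_le (nv_nonneg y) with h0 | h0
  · rw [← h0]; exact nv_nonneg w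
  · have : nv y * nv y ≤ nv w * nv y := by rwa [← sq]
    exact le_of_mul_le_mul_right this h0

lemma nv_proj_le {V : Matrix (Fin p) (Fin q) ℝ} (hV : Vᵀ * V = 1) (w : Fin p → ℝ) :
    nv ((V * Vᵀ).mulVec w) ≤ nv w := by
  rw [← mulVec_mulVec, nv_isometry hV]
  exact nv_transpose_le hV w

end aux

/-- Lipschitz-type bound for `d(V,s)(x) = ‖x − s‖² − ⟨x − s, VVᵀ(x − s)⟩` over a
bounded support: if `‖VVᵀ − V'V'ᵀ‖ < δ` and `‖s − s'‖ < δ` then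
`|d(V,s)(x) − d(V',s')(x)| ≤ (8C₁ + 4C₁²)δ`. -/
theorem stmt11 {p q : ℕ} (S : Set (Fin p → ℝ)) (C₁ : ℝ)
    (hS : ∀ z ∈ S, Real.sqrt (z ⬝ᵥ z) ≤ C₁)
    (δ : ℝ) (hδ : 0 < δ)
    (V V' : Matrix (Fin p) (Fin q) ℝ) (hV : Vᵀ * V = 1) (hV' : V'ᵀ * V' = 1)
    (hVV : frob (V * Vᵀ - V' * V'ᵀ) < δ)
    (s s' : Fin p → ℝ) (hs : s ∈ S) (hs' : s' ∈ S)
    (hss : Real.sqrt ((s - s') ⬝ᵥ (s - s')) < δ)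
    (x : Fin p → ℝ) (hx : x ∈ S) :
    |((x - s) ⬝ᵥ (x - s) - (x - s) ⬝ᵥ ((V * Vᵀ).mulVec (x - s))) -
        ((x - s') ⬝ᵥ (x - s') - (x - s') ⬝ᵥ ((V' * V'ᵀ).mulVec (x - s')))| ≤
      (8 * C₁ + 4 * C₁ ^ 2) * δ := by
  set u := x - s with hu
  set u' := x - s' with hu'
  set P := V * Vᵀ with hP
  set P' := V' * V'ᵀ with hP'
  -- basic norm bounds
  have hxn : nv x ≤ C₁ := hS x hx
  have hsn : nv s ≤ C₁ := hS s hs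
  have hsn' : nv s' ≤ C₁ := hS s' hs'
  have hC₁ : 0 ≤ C₁ := le_trans (nv_nonneg x) hxn
  have hun : nv u ≤ 2 * C₁ := by
    have h1 : u = x + (-s) := by rw [hu]; ring
    have hneg : nv (-s) = nv s := by unfold nv; congr 1; simp [dotProduct]
    have := nv_add_le x (-s)
    rw [← h1, hneg] at this
    linarith
  have hun' : nv u' ≤ 2 * C₁ := by
    have h1 : u' = x + (-s') := by rw [hu']; ring
    have hneg : nv (-s') = nv s' := by unfold nv; congr 1; simp [dotProduct]
    have := nv_add_le x (-s')
    rw [← h1, hneg] at this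
    linarith
  have hdiff : nv (u - u') < δ := by
    have : u - u' = s' - s := by rw [hu, hu']; ring
    rw [this, nv_sub_comm]
    exact hss
  -- algebraic decomposition
  have key : (u ⬝ᵥ u - u ⬝ᵥ P.mulVec u) - (u' ⬝ᵥ u' - u' ⬝ᵥ P'.mulVec u')
      = ((u + u') ⬝ᵥ (u - u')) - (u ⬝ᵥ (P - P').mulVec u)
        - ((u - u') ⬝ᵥ P'.mulVec u + u' ⬝ᵥ P'.mulVec (u - u')) := by
    have e1 : (u + u') ⬝ᵥ (u - u') = u ⬝ᵥ u - u' ⬝ᵥ u' := by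
      simp only [dotProduct, Pi.add_apply, Pi.sub_apply]
      rw [← Finset.sum_sub_distrib]
      exact Finset.sum_congr rfl fun i _ => by ring
    have e2 : u ⬝ᵥ (P - P').mulVec u = u ⬝ᵥ P.mulVec u - u ⬝ᵥ P'.mulVec u := by
      rw [sub_mulVec, dotProduct_sub]
    have e3 : (u - u') ⬝ᵥ P'.mulVec u = u ⬝ᵥ P'.mulVec u - u' ⬝ᵥ P'.mulVec u := by
      rw [sub_dotProduct]
    have e4 : u' ⬝ᵥ P'.mulVec (u - u') = u' ⬝ᵥ P'.mulVec u - u' ⬝ᵥ P'.mulVec u' := by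
      rw [mulVec_sub, dotProduct_sub]
    rw [e1, e2, e3, e4]; ring
  rw [key]
  -- bound each term
  have b1 : |(u + u') ⬝ᵥ (u - u')| ≤ 4 * C₁ * δ := by
    calc |(u + u') ⬝ᵥ (u - u')| ≤ nv (u + u') * nv (u - u') := abs_dot_le _ _
      _ ≤ (4 * C₁) * δ := by
        have h1 : nv (u + u') ≤ 4 * C₁ := le_trans (nv_add_le u u') (by linarith)
        exact mul_le_mul h1 hdiff.le (nv_nonneg _) (by linarith)
  have b2 : |u ⬝ᵥ (P - P').mulVec u| ≤ 4 * C₁ ^ 2 * δ := by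
    calc |u ⬝ᵥ (P - P').mulVec u| ≤ nv u * nv ((P - P').mulVec u) := abs_dot_le _ _
      _ ≤ nv u * (frob (P - P') * nv u) := by
        exact mul_le_mul_of_nonneg_left (nv_mulVec_le_frob u) (nv_nonneg _)
      _ ≤ (2 * C₁) * (δ * (2 * C₁)) := by
        have hf : 0 ≤ frob (P - P') := Real.sqrt_nonneg _
        have h1 : frob (P - P') * nv u ≤ δ * (2 * C₁) :=
          mul_le_mul hVV.le hun (nv_nonneg u) hδ.le
        exact mul_le_mul hun h1 (mul_nonneg hf (nv_nonneg u)) (by linarith)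
      _ = 4 * C₁ ^ 2 * δ := by ring
  have b3 : |(u - u') ⬝ᵥ P'.mulVec u| ≤ 2 * C₁ * δ := by
    calc |(u - u') ⬝ᵥ P'.mulVec u| ≤ nv (u - u') * nv (P'.mulVec u) := abs_dot_le _ _
      _ ≤ δ * (2 * C₁) := by
        have h1 : nv (P'.mulVec u) ≤ 2 * C₁ := le_trans (nv_proj_le hV' u) hun
        exact mul_le_mul hdiff.le h1 (nv_nonneg _) hδ.le
      _ = 2 * C₁ * δ := by ring
  have b4 : |u' ⬝ᵥ P'.mulVec (u - u')| ≤ 2 * C₁ * δ := by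
    calc |u' ⬝ᵥ P'.mulVec (u - u')| ≤ nv u' * nv (P'.mulVec (u - u')) := abs_dot_le _ _
      _ ≤ 2 * C₁ * δ := by
        have h1 : nv (P'.mulVec (u - u')) ≤ nv (u - u') := nv_proj_le hV' (u - u')
        exact mul_le_mul hun' (le_of_lt (lt_of_le_of_lt h1 hdiff)) (nv_nonneg _)
          (by linarith)
  calc |(u + u') ⬝ᵥ (u - u') - u ⬝ᵥ (P - P').mulVec u -
        ((u - u') ⬝ᵥ P'.mulVec u + u' ⬝ᵥ P'.mulVec (u - u'))|
      ≤ |(u + u') ⬝ᵥ (u - u')| + |u ⬝ᵥ (P - P').mulVec u| +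
        (|(u - u') ⬝ᵥ P'.mulVec u| + |u' ⬝ᵥ P'.mulVec (u - u')|) := by
        calc _ ≤ |(u + u') ⬝ᵥ (u - u') - u ⬝ᵥ (P - P').mulVec u| +
              |(u - u') ⬝ᵥ P'.mulVec u + u' ⬝ᵥ P'.mulVec (u - u')| := abs_sub _ _
          _ ≤ _ := by
            gcongr
            · exact abs_sub _ _
            · exact abs_add_le _ _
    _ ≤ 4 * C₁ * δ + 4 * C₁ ^ 2 * δ + (2 * C₁ * δ + 2 * C₁ * δ) := by gcongr
    _ = (8 * C₁ + 4 * C₁ ^ 2) * δ := by ring
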